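/- Let p > 1, A ∈ ℝ^{m×n}, b ∈ ℝ^m, L ∈ ℝ^{l×n}, and let W = [W_k, W_0] ∈ ℝ^{n×n} be orthogonal, with W_k ∈ ℝ^{n×k} and W_0 ∈ ℝ^{n×(n−k)}. Suppose A W_k and L W_0 both have full column rank. Let y_k be the unique minimizer of y ↦ ‖(A W_k) y − b‖₂ and let y_0 be the unique minimizer of y ↦ ‖(L W_0) y − (−L W_k y_k)‖_p. Then x = W_k y_k + W_0 y_0 is the unique solution of min_{x ∈ B} ‖Lx‖_p, where B is the set of minimizers over z ∈ ℝ^n of ‖(A W_k W_kᵀ) z − b‖₂. -/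

import Mathlib

/-!
Because `W = [W_k, W_0]` is orthogonal, `W_kᵀ` is onto and `W_k W_kᵀ + W_0 W_0ᵀ = I`. Hence
`z ∈ B` iff `W_kᵀ z` minimizes `‖(A W_k) y - b‖₂`, i.e. iff `W_kᵀ z = y_k`, which says
`B = {W_k y_k + W_0 w}`. On `B` we have `L z = (L W_0) w + L W_k y_k`, so minimizing `‖L z‖_p`
over `B` is exactly the problem solved by `y_0`. Both minimizers are unique because
`v ↦ ∑ |v_i|^p` is strictly convex for `p > 1` and stays so after composing with the injective
affine maps `y ↦ M y - c`.
-/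

open Matrix Set Function

section Convexity

variable {𝕜 E F β : Type*} [Field 𝕜] [LinearOrder 𝕜]
  [AddCommGroup E] [AddCommGroup F] [Module 𝕜 E] [Module 𝕜 F]
  [AddCommMonoid β] [PartialOrder β]

theorem StrictConvexOn.comp_affineMap_of_injective [SMul 𝕜 β]
    {f : F → β} (hf : StrictConvexOn 𝕜 univ f) (g : E →ᵃ[𝕜] F) (hg : Injective g) :
    StrictConvexOn 𝕜 univ (f ∘ g) :=
  ⟨convex_univ, fun x _ y _ hxy a b ha hb hab => by
    simpa only [Function.comp_apply, Convex.combo_affine_apply hab] using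
      hf.2 trivial trivial (hg.ne hxy) ha hb hab⟩

theorem StrictConvexOn.comp_mulVec_sub [SMul 𝕜 β]
    {m n : Type*} [Fintype n] {f : (m → 𝕜) → β} (hf : StrictConvexOn 𝕜 univ f)
    {M : Matrix m n 𝕜} (hM : Injective M.mulVec) (c : m → 𝕜) :
    StrictConvexOn 𝕜 univ fun y => f (M *ᵥ y - c) :=
  hf.comp_affineMap_of_injective (M.mulVecLin.toAffineMap - AffineMap.const 𝕜 (n → 𝕜) c)
    fun y y' h => hM (by simpa using h)

theorem strictConvexOn_univ_sum_apply [IsOrderedCancelAddMonoid β] [Module 𝕜 β]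
    {ι : Type*} [Fintype ι] {f : ι → E → β} (hf : ∀ i, StrictConvexOn 𝕜 univ (f i)) :
    StrictConvexOn 𝕜 univ fun v : ι → E => ∑ i, f i (v i) := by
  refine ⟨convex_univ, fun x _ y _ hxy a b ha hb hab => ?_⟩
  obtain ⟨j, hj⟩ := Function.ne_iff.1 hxy
  simp only [Pi.add_apply, Pi.smul_apply, Finset.smul_sum, ← Finset.sum_add_distrib]
  exact Finset.sum_lt_sum (fun i _ => (hf i).convexOn.2 trivial trivial ha.le hb.le hab)
    ⟨j, Finset.mem_univ j, (hf j).2 trivial trivial hj ha hb hab⟩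

end Convexity

theorem strictConvexOn_abs_rpow {p : ℝ} (hp : 1 < p) :
    StrictConvexOn ℝ univ fun x : ℝ => |x| ^ p := by
  refine ⟨convex_univ, fun x _ y _ hxy a b ha hb hab => ?_⟩
  have htri : |a * x + b * y| ≤ a * |x| + b * |y| := by
    simpa only [abs_mul, abs_of_pos ha, abs_of_pos hb] using abs_add_le (a * x) (b * y)
  have hjensen := (convexOn_rpow hp.le).2 (abs_nonneg x) (abs_nonneg y) ha.le hb.le hab
  simp only [smul_eq_mul] at hjensen ⊢
  by_cases habs : |x| = |y|
  · have hy : y = -x := by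
      rcases abs_eq_abs.1 habs with h | h
      · exact absurd h hxy
      · rw [h, neg_neg]
    have hx : x ≠ 0 := by rintro rfl; simp [hy] at hxy
    -- `t ↦ t ^ p` gives no strictness when `|x| = |y|`; the triangle inequality does
    have hlt : |a * x + b * y| < a * |x| + b * |y| :=
      calc |a * x + b * y| = |a - b| * |x| := by rw [hy, ← abs_mul]; ring_nf
        _ < (a + b) * |x| :=
          mul_lt_mul_of_pos_right (abs_sub_lt_iff.2 ⟨by linarith, by linarith⟩) (abs_pos.2 hx)
        _ = a * |x| + b * |y| := by rw [hy, abs_neg]; ring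
    exact (Real.rpow_lt_rpow (abs_nonneg _) hlt (by linarith)).trans_le hjensen
  · calc |a * x + b * y| ^ p ≤ (a * |x| + b * |y|) ^ p :=
          Real.rpow_le_rpow (abs_nonneg _) htri (by linarith)
      _ < a * |x| ^ p + b * |y| ^ p := by
          simpa only [smul_eq_mul] using
            (strictConvexOn_rpow hp).2 (abs_nonneg x) (abs_nonneg y) habs ha hb hab

section Minimizers

variable {α β γ : Type*}

theorem isMinOn_comp_iff_of_strictMonoOn [LinearOrder β] [Preorder γ] {f : α → β}
    {φ : β → γ} {s : Set α} {a : α} (hφ : StrictMonoOn φ (f '' s)) (ha : a ∈ s) :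
    IsMinOn (φ ∘ f) s a ↔ IsMinOn f s a := by
  simp only [isMinOn_iff, Function.comp_apply]
  exact forall₂_congr fun x hx => hφ.le_iff_le (mem_image_of_mem f ha) (mem_image_of_mem f hx)

theorem isMinOn_range_iff [Preorder γ] {g : α → β} {f : β → γ} {a : α} :
    IsMinOn f (range g) (g a) ↔ IsMinOn (f ∘ g) univ a := by
  simp [isMinOn_iff]

theorem setOf_isMinOn_comp_eq_preimage [Preorder γ] {g : α → β} (hg : Surjective g)
    {f : β → γ} {y : β} (hy : IsMinOn f univ y)
    (huniq : ∀ y', IsMinOn f univ y' → y' = y) :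
    {z | IsMinOn (f ∘ g) univ z} = g ⁻¹' {y} := by
  ext z
  change IsMinOn (f ∘ g) univ z ↔ g z = y
  rw [← isMinOn_range_iff, hg.range_eq]
  exact ⟨huniq _, fun hz => hz ▸ hy⟩

end Minimizers

namespace Matrix

theorem eq_of_isMinOn_comp_mulVec_sub {m n : Type*} [Fintype n]
    {f : (m → ℝ) → ℝ} {φ : ℝ → ℝ} (hf : StrictConvexOn ℝ univ f)
    (hφ : StrictMonoOn φ (range f))
    {M : Matrix m n ℝ} (hM : Injective M.mulVec) {c : m → ℝ} {y y' : n → ℝ}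
    (hy : IsMinOn (fun w => φ (f (M *ᵥ w - c))) univ y)
    (hy' : IsMinOn (fun w => φ (f (M *ᵥ w - c))) univ y') : y = y' := by
  have hφ' : StrictMonoOn φ ((fun w => f (M *ᵥ w - c)) '' univ) :=
    hφ.mono (image_subset_iff.2 fun w _ => mem_range_self _)
  exact (hf.comp_mulVec_sub hM c).eq_of_isMinOn
    ((isMinOn_comp_iff_of_strictMonoOn hφ' trivial).1 hy)
    ((isMinOn_comp_iff_of_strictMonoOn hφ' trivial).1 hy') trivial trivial

theorem eq_of_isMinOn_sqrt_sum_sq_sub {m n : Type*} [Fintype m] [Fintype n]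
    {M : Matrix m n ℝ} (hM : Injective M.mulVec) {c : m → ℝ} {y y' : n → ℝ}
    (hy : IsMinOn (fun w => √(∑ i, (M *ᵥ w - c) i ^ 2)) univ y)
    (hy' : IsMinOn (fun w => √(∑ i, (M *ᵥ w - c) i ^ 2)) univ y') : y = y' :=
  eq_of_isMinOn_comp_mulVec_sub
    (strictConvexOn_univ_sum_apply fun _ => Even.strictConvexOn_pow even_two two_ne_zero)
    (Real.strictMonoOn_sqrt.mono (range_subset_iff.2 fun _ => mem_Ici.2 (by positivity)))
    hM hy hy'

theorem eq_of_isMinOn_sum_abs_rpow_sub {m n : Type*} [Fintype m] [Fintype n] {p : ℝ}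
    (hp : 1 < p) {M : Matrix m n ℝ} (hM : Injective M.mulVec) {c : m → ℝ} {y y' : n → ℝ}
    (hy : IsMinOn (fun w => (∑ i, |(M *ᵥ w - c) i| ^ p) ^ (1 / p)) univ y)
    (hy' : IsMinOn (fun w => (∑ i, |(M *ᵥ w - c) i| ^ p) ^ (1 / p)) univ y') : y = y' :=
  eq_of_isMinOn_comp_mulVec_sub
    (strictConvexOn_univ_sum_apply fun _ => strictConvexOn_abs_rpow hp)
    ((Real.strictMonoOn_rpow_Ici_of_exponent_pos (by positivity)).mono
      (range_subset_iff.2 fun _ => mem_Ici.2 (by positivity)))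
    hM hy hy'

theorem card_le_card_of_mul_eq_one {R m n : Type*} [CommSemiring R] [StrongRankCondition R]
    [Fintype m] [Fintype n] [DecidableEq n] {A : Matrix n m R} {B : Matrix m n R}
    (h : A * B = 1) : Fintype.card n ≤ Fintype.card m :=
  calc Fintype.card n = (A * B).rank := by rw [h, rank_one]
    _ ≤ B.rank := rank_mul_le_right A B
    _ ≤ Fintype.card m := rank_le_card_height B

theorem transpose_fromCols_mul_fromCols_eq_one_iff {R m n₁ n₂ : Type*} [Semiring R]
    [Fintype m] [DecidableEq n₁] [DecidableEq n₂] {A : Matrix m n₁ R} {B : Matrix m n₂ R} :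
    (fromCols A B)ᵀ * fromCols A B = 1 ↔
      Aᵀ * A = 1 ∧ Aᵀ * B = 0 ∧ Bᵀ * A = 0 ∧ Bᵀ * B = 1 := by
  rw [transpose_fromCols, fromRows_mul_fromCols, ← fromBlocks_one, fromBlocks_inj]

theorem mul_transpose_add_mul_transpose_eq_one {R : Type*} [CommRing R] [Nontrivial R]
    {n k : ℕ} {U : Matrix (Fin n) (Fin k) R} {V : Matrix (Fin n) (Fin (n - k)) R}
    (h : (fromCols U V)ᵀ * fromCols U V = 1) : U * Uᵀ + V * Vᵀ = 1 := by
  have hkn : k ≤ n := by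
    simpa using card_le_card_of_mul_eq_one (transpose_fromCols_mul_fromCols_eq_one_iff.1 h).1
  have e : Fin k ⊕ Fin (n - k) ≃ Fin n := finSumFinEquiv.trans (finCongr (by omega))
  rw [← fromCols_mul_fromRows, ← transpose_fromCols]
  exact (mul_eq_one_comm_of_equiv e).1 h

theorem preimage_transpose_mulVec_singleton {R m n₁ n₂ : Type*} [CommSemiring R] [Fintype m]
    [Fintype n₁] [Fintype n₂] [DecidableEq m] [DecidableEq n₁]
    {U : Matrix m n₁ R} {V : Matrix m n₂ R}
    (hUU : Uᵀ * U = 1) (hUV : Uᵀ * V = 0) (hsplit : U * Uᵀ + V * Vᵀ = 1) (y : n₁ → R) :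
    Uᵀ.mulVec ⁻¹' {y} = range fun w => U *ᵥ y + V *ᵥ w := by
  ext z
  constructor
  · rintro (hz : Uᵀ *ᵥ z = y)
    refine ⟨Vᵀ *ᵥ z, ?_⟩
    dsimp only
    rw [← hz, mulVec_mulVec, mulVec_mulVec, ← add_mulVec, hsplit, one_mulVec]
  · rintro ⟨w, rfl⟩
    simp [mulVec_add, mulVec_mulVec, hUU, hUV]

end Matrix

/-- Correctness of the EPP Algorithm: if `W = [W_k, W_0]` is orthogonal, `A W_k` and
`L W_0` have full column rank, `y_k` minimizes `‖(A W_k) y - b‖₂` and `y_0` minimizes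
`‖(L W_0) y - (-L W_k y_k)‖_p`, then `x = W_k y_k + W_0 y_0` is the unique solution of
`min_{x ∈ B} ‖L x‖_p`, where `B` is the set of minimizers of `‖(A W_k W_kᵀ) z - b‖₂`. -/
theorem stmt_18 (m n k l : ℕ) (p : ℝ) (hp : 1 < p)
    (A : Matrix (Fin m) (Fin n) ℝ) (b : Fin m → ℝ)
    (L : Matrix (Fin l) (Fin n) ℝ)
    (Wk : Matrix (Fin n) (Fin k) ℝ) (W0 : Matrix (Fin n) (Fin (n - k)) ℝ)
    (hW : (Matrix.fromCols Wk W0)ᵀ * Matrix.fromCols Wk W0 = 1)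
    (hrankA : Function.Injective (A * Wk).mulVec)
    (hrankL : Function.Injective (L * W0).mulVec)
    (yk : Fin k → ℝ)
    (hyk : ∀ y : Fin k → ℝ,
      Real.sqrt (∑ i, ((A * Wk).mulVec yk - b) i ^ 2) ≤
        Real.sqrt (∑ i, ((A * Wk).mulVec y - b) i ^ 2))
    (y0 : Fin (n - k) → ℝ)
    (hy0 : ∀ y : Fin (n - k) → ℝ,
      (∑ i, |((L * W0).mulVec y0 - (-(L.mulVec (Wk.mulVec yk)))) i| ^ p) ^ (1 / p) ≤
        (∑ i, |((L * W0).mulVec y - (-(L.mulVec (Wk.mulVec yk)))) i| ^ p) ^ (1 / p))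
    (B : Set (Fin n → ℝ))
    (hB : B = {z : Fin n → ℝ | ∀ w : Fin n → ℝ,
      Real.sqrt (∑ i, ((A * Wk * Wkᵀ).mulVec z - b) i ^ 2) ≤
        Real.sqrt (∑ i, ((A * Wk * Wkᵀ).mulVec w - b) i ^ 2)})
    (x : Fin n → ℝ) (hx : x = Wk.mulVec yk + W0.mulVec y0) :
    (x ∈ B ∧ ∀ z ∈ B,
        (∑ i, |(L.mulVec x) i| ^ p) ^ (1 / p) ≤ (∑ i, |(L.mulVec z) i| ^ p) ^ (1 / p)) ∧
      ∀ x' : Fin n → ℝ, (x' ∈ B ∧ ∀ z ∈ B,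
          (∑ i, |(L.mulVec x') i| ^ p) ^ (1 / p) ≤ (∑ i, |(L.mulVec z) i| ^ p) ^ (1 / p)) →
        x' = x := by
  obtain ⟨hUU, hUV, -, -⟩ := transpose_fromCols_mul_fromCols_eq_one_iff.1 hW
  have hsurj : Surjective Wkᵀ.mulVec := fun y =>
    ⟨Wk *ᵥ y, by rw [mulVec_mulVec, hUU, one_mulVec]⟩
  have hBrange : B = range fun w => Wk *ᵥ yk + W0 *ᵥ w := by
    rw [← preimage_transpose_mulVec_singleton hUU hUV (mul_transpose_add_mul_transpose_eq_one hW),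
      ← setOf_isMinOn_comp_eq_preimage hsurj (isMinOn_univ_iff.2 hyk)
        fun y hy => eq_of_isMinOn_sqrt_sum_sq_sub hrankA hy (isMinOn_univ_iff.2 hyk), hB]
    ext z
    simp [isMinOn_univ_iff, mulVec_mulVec]
  have hreduced : ∀ w,
      IsMinOn (fun z => (∑ i, |(L *ᵥ z) i| ^ p) ^ (1 / p)) B (Wk *ᵥ yk + W0 *ᵥ w) ↔
        IsMinOn (fun y => (∑ i, |((L * W0) *ᵥ y - -(L *ᵥ (Wk *ᵥ yk))) i| ^ p) ^ (1 / p))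
          univ w := by
    intro w
    rw [hBrange, isMinOn_range_iff]
    simp only [Function.comp_def, mulVec_add, mulVec_mulVec, sub_neg_eq_add, add_comm]
  have hy0' :
      IsMinOn (fun y => (∑ i, |((L * W0) *ᵥ y - -(L *ᵥ (Wk *ᵥ yk))) i| ^ p) ^ (1 / p))
        univ y0 :=
    isMinOn_univ_iff.2 hy0
  refine ⟨⟨hBrange ▸ ⟨y0, hx.symm⟩, hx ▸ isMinOn_iff.1 ((hreduced y0).2 hy0')⟩, ?_⟩
  rintro x' ⟨hx'B, hx'min⟩
  obtain ⟨w, rfl⟩ := hBrange ▸ hx'B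
  rw [hx, eq_of_isMinOn_sum_abs_rpow_sub hp hrankL ((hreduced w).1 (isMinOn_iff.2 hx'min))
    hy0']
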